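/- There exists a bounded linear operator T on ℓ²(ℤ) and nontrivial closed subspaces M₁, M₂ of ℓ²(ℤ) such that T is M₁-hypercyclic and T* is M₂-hypercyclic, i.e. there are vectors x, y with Orb(T,x) ∩ M₁ dense in M₁ and Orb(T*,y) ∩ M₂ dense in M₂. -/

import Mathlib

open Filter Finset Topology

noncomputable section

/-- `T` is `M`-hypercyclic: some orbit meets `M` in a dense subset of `M`. -/
def SubspaceHypercyclic {H : Type*} [NormedAddCommGroup H] [NormedSpace ℂ H]
    (T : H →L[ℂ] H) (M : Set H) : Prop :=
  ∃ x : H, M ⊆ closure ((Set.range fun n : ℕ => (T ^ n) x) ∩ M)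

/-- The Hilbert space `ℓ²(ℤ)`. -/
abbrev HZ : Type := lp (fun _ : ℤ => ℂ) 2

/-- The standard orthonormal basis vectors of `ℓ²(ℤ)`. -/
def e (n : ℤ) : HZ := lp.single 2 n (1 : ℂ)

namespace HerreroAux

lemma two_toReal : (2 : ENNReal).toReal = 2 := by norm_num

lemma preLp_add_apply (A B : PreLp fun _ : ℤ => ℂ) (m : ℤ) : (A + B) m = A m + B m := rfl

lemma preLp_smul_apply (a : ℂ) (A : PreLp fun _ : ℤ => ℂ) (m : ℤ) : (a • A) m = a • A m := rfl

lemma add_apply' (f g : HZ) (m : ℤ) : (f + g) m = f m + g m := by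
  rw [lp.coeFn_add]; rfl

lemma smul_apply' (a : ℂ) (f : HZ) (m : ℤ) : (a • f) m = a * f m := by
  rw [lp.coeFn_smul]; rfl

lemma sub_apply' (f g : HZ) (m : ℤ) : (f - g) m = f m - g m := by
  rw [lp.coeFn_sub]; rfl

lemma zero_apply' (m : ℤ) : (0 : HZ) m = 0 := by rw [lp.coeFn_zero]; rfl

lemma norm_apply_le (f : HZ) (m : ℤ) : ‖f m‖ ≤ ‖f‖ :=
  lp.norm_apply_le_norm (by norm_num) f m

lemma continuous_eval (m : ℤ) : Continuous fun f : HZ => f m := by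
  refine (LipschitzWith.of_dist_le_mul (K := 1) fun f g => ?_).continuous
  rw [dist_eq_norm, dist_eq_norm, ← sub_apply']
  simpa using norm_apply_le (f - g) m

lemma memlp_shift (c : ℂ) (k : ℤ) (p : ℤ → Prop) [DecidablePred p] (f : HZ) :
    Memℓp (fun m => if p m then c * f (m + k) else 0) 2 := by
  apply memℓp_gen
  have hs : Summable fun m : ℤ => ‖f m‖ ^ (2 : ENNReal).toReal :=
    (lp.memℓp f).summable (by norm_num)
  have hs2 : Summable fun m : ℤ =>
      ‖c‖ ^ (2 : ENNReal).toReal * ‖f (m + k)‖ ^ (2 : ENNReal).toReal :=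
    (((Equiv.addRight k).summable_iff).2 hs).mul_left _
  apply Summable.of_nonneg_of_le _ _ hs2
  · intro m; positivity
  · intro m
    by_cases h : p m <;> simp [h, two_toReal]
    · rw [mul_pow]
    · positivity

/-- general masked weighted shift operator -/
def shiftOp (c : ℂ) (k : ℤ) (p : ℤ → Prop) [DecidablePred p] : HZ →L[ℂ] HZ :=
  LinearMap.mkContinuous
    { toFun := fun f => ⟨fun m => if p m then c * f (m + k) else 0, memlp_shift c k p f⟩
      map_add' := by
        intro f g
        apply lp.ext
        funext m
        by_cases h : p m <;>
          (show _ = (if p m then c * f (m + k) else 0) + (if p m then c * g (m + k) else 0)) <;>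
          simp [lp.coeFn_add, preLp_add_apply, Pi.add_apply, h, mul_add]
      map_smul' := by
        intro a f
        apply lp.ext
        funext m
        by_cases h : p m <;>
          simp [lp.coeFn_smul, preLp_smul_apply, Pi.smul_apply, h, smul_eq_mul]
        ring }
    ‖c‖
    (by
      intro f
      dsimp
      apply lp.norm_le_of_tsum_le (by norm_num) (by positivity)
      have hs : Summable fun m : ℤ => ‖f m‖ ^ (2 : ENNReal).toReal :=
        (lp.memℓp f).summable (by norm_num)
      have hs2 : Summable fun m : ℤ =>
          ‖c‖ ^ (2 : ENNReal).toReal * ‖f (m + k)‖ ^ (2 : ENNReal).toReal :=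
        (((Equiv.addRight k).summable_iff).2 hs).mul_left _
      have hle : ∑' m : ℤ, ‖(if p m then c * f (m + k) else 0 : ℂ)‖ ^ (2 : ENNReal).toReal
          ≤ ∑' m : ℤ, ‖c‖ ^ (2 : ENNReal).toReal * ‖f (m + k)‖ ^ (2 : ENNReal).toReal := by
        apply Summable.tsum_le_tsum _ _ hs2
        · intro m
          by_cases h : p m <;> simp [h, two_toReal]
          · rw [mul_pow]
          · positivity
        · exact memℓp_gen_iff (by norm_num) |>.1 (memlp_shift c k p f)
      refine hle.trans ?_
      have hre := Equiv.tsum_eq (Equiv.addRight k) (fun m : ℤ => ‖f m‖ ^ (2 : ENNReal).toReal)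
      simp only [Equiv.coe_addRight] at hre
      rw [tsum_mul_left, hre, ← lp.norm_rpow_eq_tsum (by norm_num) f,
        ← Real.mul_rpow (norm_nonneg c) (lp.norm_nonneg' f)])

lemma shiftOp_apply (c : ℂ) (k : ℤ) (p : ℤ → Prop) [DecidablePred p] (f : HZ) (m : ℤ) :
    shiftOp c k p f m = if p m then c * f (m + k) else 0 := rfl

lemma shiftOp_norm_le (c : ℂ) (k : ℤ) (p : ℤ → Prop) [DecidablePred p] (f : HZ) :
    ‖shiftOp c k p f‖ ≤ ‖c‖ * ‖f‖ :=
  ((shiftOp c k p).le_opNorm f).trans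
    (mul_le_mul_of_nonneg_right
      (LinearMap.mkContinuous_norm_le _ (norm_nonneg c) _) (norm_nonneg f))

/-- The closed subspace of functions supported in `s`. -/
def Msub (s : Set ℤ) : Submodule ℂ HZ where
  carrier := {f : HZ | ∀ m, m ∉ s → f m = 0}
  add_mem' := fun hf hg m hm => by rw [add_apply', hf m hm, hg m hm, add_zero]
  zero_mem' := fun m _ => zero_apply' m
  smul_mem' := fun a f hf m hm => by rw [smul_apply', hf m hm, mul_zero]

lemma mem_Msub {s : Set ℤ} {f : HZ} : f ∈ Msub s ↔ ∀ m, m ∉ s → f m = 0 := Iff.rfl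

lemma isClosed_Msub (s : Set ℤ) : IsClosed ((Msub s : Submodule ℂ HZ) : Set HZ) := by
  have : ((Msub s : Submodule ℂ HZ) : Set HZ)
      = ⋂ m ∈ {m : ℤ | m ∉ s}, {f : HZ | f m = 0} := by
    ext f
    simp only [Set.mem_iInter, Set.mem_setOf_eq, SetLike.mem_coe, mem_Msub]
  rw [this]
  exact isClosed_biInter fun m _ => isClosed_eq (continuous_eval m) continuous_const

lemma e_apply (n m : ℤ) : e n m = if m = n then 1 else 0 := by
  rw [e, lp.single_apply]
  by_cases h : m = n
  · subst h; simp
  · simp [h]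

lemma Msub_ne_bot {s : Set ℤ} {n : ℤ} (hn : n ∈ s) : Msub s ≠ ⊥ := by
  rw [Submodule.ne_bot_iff]
  refine ⟨e n, ?_, ?_⟩
  · intro m hm
    rw [e_apply]
    have : m ≠ n := fun h => hm (h ▸ hn)
    simp [this]
  · intro h
    have := congrArg (fun f : HZ => f n) h
    simp [e_apply, zero_apply'] at this

lemma Msub_ne_top {s : Set ℤ} {n : ℤ} (hn : n ∉ s) : Msub s ≠ ⊤ := by
  intro h
  have he : e n ∈ Msub s := h ▸ Submodule.mem_top
  have := he n hn
  rw [e_apply] at this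
  simp at this

/-- truncation: approximate elements of `Msub s` by finitely supported ones. -/
lemma trunc_approx (s : Set ℤ) (f : HZ) (hf : f ∈ Msub s) {ε : ℝ} (hε : 0 < ε) :
    ∃ u : HZ, ∃ t : Finset ℤ, u ∈ Msub s ∧ (∀ m, m ∉ t → u m = 0) ∧ ‖f - u‖ < ε := by
  have hs := lp.hasSum_single (by norm_num : (2 : ENNReal) ≠ ⊤) f
  rw [HasSum, Metric.tendsto_nhds] at hs
  obtain ⟨t, ht⟩ := (hs ε hε).exists
  refine ⟨∑ i ∈ t, lp.single 2 i (f i), t, ?_, ?_, ?_⟩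
  · intro m hm
    simp only [lp.coeFn_sum, Finset.sum_apply, lp.single_apply, Finset.sum_dite_eq]
    by_cases h : m ∈ t <;> simp [h, hf m hm]
  · intro m hm
    simp only [lp.coeFn_sum, Finset.sum_apply, lp.single_apply, Finset.sum_dite_eq]
    simp [hm]
  · rw [dist_eq_norm] at ht
    rw [← norm_neg]
    simpa [neg_sub] using ht

lemma rat_approx (z : ℂ) {δ : ℝ} (hδ : 0 < δ) :
    ∃ q : ℚ × ℚ, ‖z - ((q.1 : ℂ) + (q.2 : ℂ) * Complex.I)‖ < δ := by
  obtain ⟨a, ha⟩ := exists_rat_near z.re (by positivity : (0:ℝ) < δ/2)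
  obtain ⟨b, hb⟩ := exists_rat_near z.im (by positivity : (0:ℝ) < δ/2)
  refine ⟨(a, b), ?_⟩
  have h1 : (z - ((a : ℂ) + (b : ℂ) * Complex.I)).re = z.re - a := by simp
  have h2 : (z - ((a : ℂ) + (b : ℂ) * Complex.I)).im = z.im - b := by simp
  calc ‖z - ((a : ℂ) + (b : ℂ) * Complex.I)‖
      ≤ |(z - ((a : ℂ) + (b : ℂ) * Complex.I)).re| +
        |(z - ((a : ℂ) + (b : ℂ) * Complex.I)).im| :=
        Complex.norm_le_abs_re_add_abs_im _
    _ < δ := by rw [h1, h2]; linarith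

lemma single_sub' (i : ℤ) (a b : ℂ) :
    (lp.single 2 i (a - b) : HZ) = lp.single 2 i a - lp.single 2 i b := by
  apply lp.ext
  funext m
  rw [lp.coeFn_sub]
  simp only [lp.single_apply, Pi.sub_apply]
  by_cases h : m = i <;> simp [h]

lemma sum_single_close (f : HZ) (t : Finset ℤ) (w : ℤ → ℂ) {δ : ℝ}
    (hw : ∀ i ∈ t, ‖f i - w i‖ ≤ δ) :
    ‖(∑ i ∈ t, lp.single 2 i (f i) : HZ) - ∑ i ∈ t, lp.single 2 i (w i)‖ ≤ t.card * δ := by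
  have hrw : (∑ i ∈ t, lp.single 2 i (f i) : HZ) - ∑ i ∈ t, lp.single 2 i (w i)
      = ∑ i ∈ t, lp.single 2 i (f i - w i) := by
    rw [← Finset.sum_sub_distrib]
    exact Finset.sum_congr rfl fun i _ => (single_sub' i _ _).symm
  rw [hrw]
  calc ‖(∑ i ∈ t, lp.single 2 i (f i - w i) : HZ)‖
      ≤ ∑ i ∈ t, ‖(lp.single 2 i (f i - w i) : HZ)‖ := norm_sum_le _ _
    _ ≤ ∑ _i ∈ t, δ := by
        refine Finset.sum_le_sum fun i hi => ?_
        have hn : ‖(lp.single 2 i (f i - w i) : HZ)‖ = ‖f i - w i‖ :=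
          lp.norm_single (E := fun _ : ℤ => ℂ) (by norm_num) i (f i - w i)
        simpa using (le_of_eq hn).trans (hw i hi)
    _ = t.card * δ := by rw [Finset.sum_const, nsmul_eq_mul]

/-- countable family of rational finite combinations of basis vectors -/
def ratComb (tq : Finset ℤ × (ℤ →₀ ℚ × ℚ)) : HZ :=
  ∑ i ∈ tq.1, lp.single 2 i (((tq.2 i).1 : ℂ) + ((tq.2 i).2 : ℂ) * Complex.I)

lemma separable_HZ : TopologicalSpace.SeparableSpace HZ := by
  refine ⟨⟨Set.range ratComb, Set.countable_range _, ?_⟩⟩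
  rw [Metric.dense_iff]
  intro f r hr
  have hs := lp.hasSum_single (by norm_num : (2 : ENNReal) ≠ ⊤) f
  rw [HasSum, Metric.tendsto_nhds] at hs
  obtain ⟨t, ht⟩ := (hs (r/2) (by positivity)).exists
  have hδ : 0 < r / (2 * (t.card + 1)) := by positivity
  have hq : ∀ i : ℤ, ∃ q : ℚ × ℚ,
      ‖f i - ((q.1 : ℂ) + (q.2 : ℂ) * Complex.I)‖ < r / (2 * (t.card + 1)) :=
    fun i => rat_approx (f i) hδ
  choose q hqs using hq
  have hQmem : ∀ i : ℤ, (fun i => if i ∈ t then q i else 0) i ≠ 0 → i ∈ t := by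
    intro i hi
    by_contra h
    simp [h] at hi
  refine ⟨ratComb (t, Finsupp.onFinset t (fun i => if i ∈ t then q i else 0) hQmem),
    Metric.mem_ball.2 ?_, Set.mem_range_self _⟩
  have hQt : ∀ i ∈ t, (Finsupp.onFinset t (fun i => if i ∈ t then q i else 0) hQmem) i = q i :=
    fun i hi => by simp [Finsupp.onFinset_apply, hi]
  have h1 : ‖(∑ i ∈ t, lp.single 2 i (f i) : HZ) - ratComb (t, Finsupp.onFinset t
        (fun i => if i ∈ t then q i else 0) hQmem)‖ ≤ t.card * (r / (2 * (t.card + 1))) := by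
    refine sum_single_close f t _ fun i hi => ?_
    rw [hQt i hi]
    exact (hqs i).le
  have h2 : (t.card : ℝ) * (r / (2 * (t.card + 1))) < r / 2 := by
    rw [← mul_div_assoc, div_lt_div_iff₀ (by positivity) (by norm_num : (0:ℝ) < 2)]
    nlinarith [hr]
  have h3 : dist (ratComb (t, Finsupp.onFinset t (fun i => if i ∈ t then q i else 0) hQmem))
      (∑ i ∈ t, lp.single 2 i (f i) : HZ) < r / 2 := by
    rw [dist_eq_norm, ← norm_neg, neg_sub]
    exact lt_of_le_of_lt h1 h2
  have h4 : dist (∑ i ∈ t, lp.single 2 i (f i) : HZ) f < r / 2 := by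
    exact ht
  calc dist (ratComb (t, Finsupp.onFinset t (fun i => if i ∈ t then q i else 0) hQmem)) f
      ≤ dist (ratComb (t, Finsupp.onFinset t (fun i => if i ∈ t then q i else 0) hQmem))
          (∑ i ∈ t, lp.single 2 i (f i) : HZ)
        + dist (∑ i ∈ t, lp.single 2 i (f i) : HZ) f := dist_triangle _ _ _
    _ < r / 2 + r / 2 := add_lt_add h3 h4
    _ = r := by ring

/-- powers preserve membership -/
lemma pow_mem (A : HZ →L[ℂ] HZ) (M : Submodule ℂ HZ) (hA : ∀ f ∈ M, A f ∈ M)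
    (n : ℕ) (f : HZ) (hf : f ∈ M) : (A ^ n) f ∈ M := by
  induction n with
  | zero => simpa using hf
  | succ n ih =>
    rw [pow_succ']
    exact hA _ ih

lemma pow_norm_le (R : HZ →L[ℂ] HZ) (hRn : ∀ f : HZ, ‖R f‖ ≤ 2⁻¹ * ‖f‖)
    (n : ℕ) (f : HZ) : ‖(R ^ n) f‖ ≤ (2⁻¹ : ℝ) ^ n * ‖f‖ := by
  induction n with
  | zero => simp
  | succ n ih =>
    rw [pow_succ']
    calc ‖R ((R ^ n) f)‖ ≤ 2⁻¹ * ‖(R ^ n) f‖ := hRn _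
      _ ≤ 2⁻¹ * ((2⁻¹ : ℝ) ^ n * ‖f‖) := by
          have := ih
          nlinarith [norm_nonneg ((R ^ n) f)]
      _ = (2⁻¹ : ℝ) ^ (n + 1) * ‖f‖ := by ring

lemma pow_cancel (A R : HZ →L[ℂ] HZ) (M : Submodule ℂ HZ)
    (hRmem : ∀ f : HZ, R f ∈ M) (hAR : ∀ f ∈ M, A (R f) = f) :
    ∀ n : ℕ, ∀ f ∈ M, (A ^ n) ((R ^ n) f) = f := by
  intro n
  induction n with
  | zero => intro f _; simp
  | succ n ih =>
    intro f hf
    have h1 : (R ^ (n + 1)) f = (R ^ n) (R f) := by rw [pow_succ]; rfl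
    have h2 : (A ^ (n + 1)) ((R ^ n) (R f)) = A ((A ^ n) ((R ^ n) (R f))) := by
      rw [pow_succ']; rfl
    rw [h1, h2, ih (R f) (hRmem f), hAR f hf]

lemma pow_eventually_zero (A : HZ →L[ℂ] HZ) {N n : ℕ} {u : HZ} (hNn : N ≤ n)
    (hN : (A ^ N) u = 0) : (A ^ n) u = 0 := by
  obtain ⟨k, rfl⟩ := Nat.exists_eq_add_of_le hNn
  rw [add_comm, pow_add, ContinuousLinearMap.mul_apply, hN, map_zero]

set_option maxHeartbeats 1000000 in
set_option synthInstance.maxHeartbeats 400000 in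
/-- Baire category engine: a right inverse of norm `≤ 1/2` mapping into `M`, plus density of
vectors annihilated by some power, gives subspace hypercyclicity. -/
lemma engine (A R : HZ →L[ℂ] HZ) (M : Submodule ℂ HZ) (hMc : IsClosed (M : Set HZ))
    (hA : ∀ f ∈ M, A f ∈ M) (hRmem : ∀ f : HZ, R f ∈ M)
    (hAR : ∀ f ∈ M, A (R f) = f)
    (hRn : ∀ f : HZ, ‖R f‖ ≤ 2⁻¹ * ‖f‖)
    (happrox : ∀ f ∈ M, ∀ ε : ℝ, 0 < ε →
      ∃ u ∈ M, (∃ N : ℕ, (A ^ N) u = 0) ∧ ‖f - u‖ < ε) :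
    SubspaceHypercyclic A (M : Set HZ) := by
  haveI : TopologicalSpace.SeparableSpace HZ := separable_HZ
  haveI : SecondCountableTopology HZ := UniformSpace.secondCountable_of_separable HZ
  haveI : CompleteSpace (M : Set HZ) := hMc.completeSpace_coe
  haveI hne : Nonempty (M : Set HZ) := ⟨⟨0, M.zero_mem⟩⟩
  set X := (M : Set HZ)
  obtain ⟨u, hu⟩ := TopologicalSpace.exists_dense_seq X
  -- the Baire sets
  set G : ℕ × ℕ → Set X := fun kj =>
    {y : X | ∃ n : ℕ, ‖(A ^ n) (y : HZ) - (u kj.1 : HZ)‖ < ((kj.2 : ℝ) + 1)⁻¹} with hG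
  have hGopen : ∀ kj, IsOpen (G kj) := by
    intro kj
    have : G kj = ⋃ n : ℕ,
        (fun y : X => (A ^ n) (y : HZ)) ⁻¹' Metric.ball (u kj.1 : HZ) ((kj.2 + 1 : ℝ)⁻¹) := by
      ext y
      simp [hG, Metric.mem_ball, dist_eq_norm]
    rw [this]
    exact isOpen_iUnion fun n => Metric.isOpen_ball.preimage
      ((A ^ n).continuous.comp continuous_subtype_val)
  have hGdense : ∀ kj, Dense (G kj) := by
    rintro ⟨k, j⟩
    rw [Metric.dense_iff]
    rintro y r hr
    obtain ⟨u', hu'M, ⟨N, hN⟩, hu'y⟩ := happrox (y : HZ) y.2 (r / 2) (by positivity)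
    -- choose n
    obtain ⟨n₁, hn₁⟩ := exists_pow_lt_of_lt_one
      (show (0:ℝ) < (r / 2) / (‖(u k : HZ)‖ + 1) by positivity)
      (show (2⁻¹ : ℝ) < 1 by norm_num)
    obtain ⟨n, hnN, hn1, hn₂⟩ : ∃ n : ℕ, N ≤ n ∧ 1 ≤ n ∧ n₁ ≤ n :=
      ⟨max (N + 1) n₁, by refine ⟨?_, ?_, ?_⟩ <;> omega⟩
    have hsmall : (2⁻¹ : ℝ) ^ n * ‖(u k : HZ)‖ < r / 2 := by
      have hmono : (2⁻¹ : ℝ) ^ n ≤ (2⁻¹ : ℝ) ^ n₁ :=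
        pow_le_pow_of_le_one (by norm_num) (by norm_num) hn₂
      have hlt : (2⁻¹ : ℝ) ^ n₁ * (‖(u k : HZ)‖ + 1) < r / 2 := by
        rw [← lt_div_iff₀ (by positivity : (0:ℝ) < ‖(u k : HZ)‖ + 1)]
        exact hn₁
      nlinarith [norm_nonneg (u k : HZ), pow_nonneg (by norm_num : (0:ℝ) ≤ 2⁻¹) n,
        pow_nonneg (by norm_num : (0:ℝ) ≤ 2⁻¹) n₁]
    -- candidate
    have hRnmem : (R ^ n) (u k : HZ) ∈ M := by
      obtain ⟨n', rfl⟩ : ∃ n', n = n' + 1 := ⟨n - 1, by omega⟩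
      rw [pow_succ']
      exact hRmem _
    set x : HZ := u' + (R ^ n) (u k : HZ) with hx
    have hxM : x ∈ M := M.add_mem hu'M hRnmem
    have hAx : (A ^ n) x = (u k : HZ) := by
      rw [hx, map_add, pow_eventually_zero A hnN hN, zero_add,
        pow_cancel A R M hRmem hAR n _ (u k).2]
    refine ⟨⟨x, hxM⟩, Metric.mem_ball.2 ?_, ?_⟩
    · have : dist (⟨x, hxM⟩ : X) y = ‖x - (y : HZ)‖ := by
        rw [Subtype.dist_eq, dist_eq_norm]
      rw [this]
      calc ‖x - (y : HZ)‖ = ‖(u' - (y : HZ)) + (R ^ n) (u k : HZ)‖ := by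
            rw [hx, add_sub_right_comm]
        _ ≤ ‖u' - (y : HZ)‖ + ‖(R ^ n) (u k : HZ)‖ := norm_add_le _ _
        _ < r / 2 + r / 2 := by
            refine add_lt_add ?_ (lt_of_le_of_lt (pow_norm_le R hRn n _) hsmall)
            rw [← norm_neg, neg_sub]
            exact hu'y
        _ = r := by ring
    · exact ⟨n, by rw [hAx, sub_self, norm_zero]; positivity⟩
  have hdense : Dense (⋂ kj, G kj) := dense_iInter_of_isOpen hGopen hGdense
  obtain ⟨x, hx⟩ := hdense.nonempty
  simp only [Set.mem_iInter] at hx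
  refine ⟨(x : HZ), ?_⟩
  intro f hf
  rw [Metric.mem_closure_iff]
  intro ε hε
  -- find a good u k
  obtain ⟨k, hk⟩ := Metric.denseRange_iff.1 hu ⟨f, hf⟩ (ε / 2) (by positivity)
  obtain ⟨j, hj⟩ := exists_nat_one_div_lt (show (0:ℝ) < ε / 2 by positivity)
  obtain ⟨n, hn⟩ := hx (k, j)
  refine ⟨(A ^ n) (x : HZ), ⟨⟨n, rfl⟩, pow_mem A M hA n _ x.2⟩, ?_⟩
  have hd1 : dist f (u k : HZ) < ε / 2 := by
    have := hk
    rwa [Subtype.dist_eq] at this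
  have hd2 : dist (u k : HZ) ((A ^ n) (x : HZ)) < ε / 2 := by
    rw [dist_comm, dist_eq_norm]
    refine lt_trans hn ?_
    have : ((j : ℝ) + 1)⁻¹ = 1 / (j + 1) := by rw [one_div]
    rw [this]
    exact_mod_cast hj
  calc dist f ((A ^ n) (x : HZ))
      ≤ dist f (u k : HZ) + dist (u k : HZ) ((A ^ n) (x : HZ)) := dist_triangle _ _ _
    _ < ε / 2 + ε / 2 := add_lt_add hd1 hd2
    _ = ε := by ring

/-! ### The concrete operators -/

/-- the operator `T`: `e n ↦ 2 e (n+1)` for `n ≥ 0` and `n ≤ -2`, `e (-1) ↦ 0`. -/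
def Top : HZ →L[ℂ] HZ := shiftOp 2 (-1) (fun m => ¬(m = 0))

/-- the prospective adjoint of `T`. -/
def Sop : HZ →L[ℂ] HZ := shiftOp 2 1 (fun m => ¬(m = -1))

/-- right inverse for `Top` on `M₁`. -/
def Rop : HZ →L[ℂ] HZ := shiftOp 2⁻¹ 1 (fun m => m ≤ -2)

/-- right inverse for `Sop` on `M₂`. -/
def R'op : HZ →L[ℂ] HZ := shiftOp 2⁻¹ (-1) (fun m => 1 ≤ m)

lemma norm_complex_half : ‖(2⁻¹ : ℂ)‖ = 2⁻¹ := by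
  rw [norm_inv]
  norm_num

lemma mem_M1 {f : HZ} : f ∈ Msub {m : ℤ | m < 0} ↔ ∀ m : ℤ, ¬(m < 0) → f m = 0 := by
  rw [mem_Msub]
  simp [Set.mem_setOf_eq]

lemma mem_M2 {f : HZ} : f ∈ Msub {m : ℤ | 0 ≤ m} ↔ ∀ m : ℤ, ¬(0 ≤ m) → f m = 0 := by
  rw [mem_Msub]
  simp [Set.mem_setOf_eq]

lemma Top_mem (f : HZ) (hf : f ∈ Msub {m : ℤ | m < 0}) : Top f ∈ Msub {m : ℤ | m < 0} := by
  rw [mem_M1] at hf ⊢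
  intro m hm
  rw [Top, shiftOp_apply]
  by_cases h : m = 0
  · simp [h]
  · rw [if_pos h, hf (m + -1) (by omega), mul_zero]

lemma Sop_mem (f : HZ) (hf : f ∈ Msub {m : ℤ | 0 ≤ m}) : Sop f ∈ Msub {m : ℤ | 0 ≤ m} := by
  rw [mem_M2] at hf ⊢
  intro m hm
  rw [Sop, shiftOp_apply]
  by_cases h : m = -1
  · simp [h]
  · rw [if_pos h, hf (m + 1) (by omega), mul_zero]

lemma Rop_mem (f : HZ) : Rop f ∈ Msub {m : ℤ | m < 0} := by
  rw [mem_M1]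
  intro m hm
  rw [Rop, shiftOp_apply, if_neg (by omega)]

lemma R'op_mem (f : HZ) : R'op f ∈ Msub {m : ℤ | 0 ≤ m} := by
  rw [mem_M2]
  intro m hm
  rw [R'op, shiftOp_apply, if_neg (by omega)]

lemma Top_Rop (f : HZ) (hf : f ∈ Msub {m : ℤ | m < 0}) : Top (Rop f) = f := by
  rw [mem_M1] at hf
  apply lp.ext
  funext m
  rw [Top, shiftOp_apply]
  by_cases h0 : m = 0
  · rw [if_neg (by omega)]
    exact (hf m (by omega)).symm
  · rw [if_pos h0, Rop, shiftOp_apply]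
    by_cases h1 : m + -1 ≤ -2
    · rw [if_pos h1]
      have hm : m + -1 + 1 = m := by ring
      rw [hm]
      ring
    · rw [if_neg h1, mul_zero]
      exact (hf m (by omega)).symm

lemma Sop_R'op (f : HZ) (hf : f ∈ Msub {m : ℤ | 0 ≤ m}) : Sop (R'op f) = f := by
  rw [mem_M2] at hf
  apply lp.ext
  funext m
  rw [Sop, shiftOp_apply]
  by_cases h0 : m = -1
  · rw [if_neg (by omega)]
    exact (hf m (by omega)).symm
  · rw [if_pos h0, R'op, shiftOp_apply]
    by_cases h1 : 1 ≤ m + 1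
    · rw [if_pos h1]
      have hm : m + 1 + -1 = m := by ring
      rw [hm]
      ring
    · rw [if_neg h1, mul_zero]
      exact (hf m (by omega)).symm

lemma Rop_norm (f : HZ) : ‖Rop f‖ ≤ 2⁻¹ * ‖f‖ := by
  have := shiftOp_norm_le 2⁻¹ 1 (fun m => m ≤ -2) f
  rwa [norm_complex_half] at this

lemma R'op_norm (f : HZ) : ‖R'op f‖ ≤ 2⁻¹ * ‖f‖ := by
  have := shiftOp_norm_le 2⁻¹ (-1) (fun m => 1 ≤ m) f
  rwa [norm_complex_half] at this

lemma Top_nil : ∀ (N : ℕ) (u : HZ), u ∈ Msub {m : ℤ | m < 0} →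
    (∀ m : ℤ, m < -(N : ℤ) → u m = 0) → (Top ^ N) u = 0 := by
  intro N
  induction N with
  | zero =>
    intro u hu hsupp
    rw [pow_zero, ContinuousLinearMap.one_apply]
    apply lp.ext
    funext m
    rw [zero_apply']
    by_cases h : m < 0
    · exact hsupp m (by omega)
    · exact mem_M1.1 hu m h
  | succ N ih =>
    intro u hu hsupp
    rw [pow_succ, ContinuousLinearMap.mul_apply]
    apply ih (Top u) (Top_mem u hu)
    intro m hm
    rw [Top, shiftOp_apply]
    by_cases h : m = 0
    · simp [h]
    · rw [if_pos h, hsupp (m + -1) (by omega), mul_zero]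

lemma Sop_nil : ∀ (N : ℕ) (u : HZ), u ∈ Msub {m : ℤ | 0 ≤ m} →
    (∀ m : ℤ, (N : ℤ) ≤ m → u m = 0) → (Sop ^ N) u = 0 := by
  intro N
  induction N with
  | zero =>
    intro u hu hsupp
    rw [pow_zero, ContinuousLinearMap.one_apply]
    apply lp.ext
    funext m
    rw [zero_apply']
    by_cases h : 0 ≤ m
    · exact hsupp m (by omega)
    · exact mem_M2.1 hu m h
  | succ N ih =>
    intro u hu hsupp
    rw [pow_succ, ContinuousLinearMap.mul_apply]
    apply ih (Sop u) (Sop_mem u hu)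
    intro m hm
    rw [Sop, shiftOp_apply]
    by_cases h : m = -1
    · simp [h]
    · rw [if_pos h, hsupp (m + 1) (by omega), mul_zero]

lemma happrox1 : ∀ f ∈ Msub {m : ℤ | m < 0}, ∀ ε : ℝ, 0 < ε →
    ∃ u ∈ Msub {m : ℤ | m < 0}, (∃ N : ℕ, (Top ^ N) u = 0) ∧ ‖f - u‖ < ε := by
  intro f hf ε hε
  obtain ⟨u, t, huM, husupp, hun⟩ := trunc_approx _ f hf hε
  refine ⟨u, huM, ⟨t.sup (fun i => i.natAbs), ?_⟩, hun⟩
  apply Top_nil _ u huM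
  intro m hm
  apply husupp
  intro hmt
  have h2 : m.natAbs ≤ t.sup (fun i : ℤ => i.natAbs) :=
    Finset.le_sup (f := fun i : ℤ => i.natAbs) hmt
  omega

lemma happrox2 : ∀ f ∈ Msub {m : ℤ | 0 ≤ m}, ∀ ε : ℝ, 0 < ε →
    ∃ u ∈ Msub {m : ℤ | 0 ≤ m}, (∃ N : ℕ, (Sop ^ N) u = 0) ∧ ‖f - u‖ < ε := by
  intro f hf ε hε
  obtain ⟨u, t, huM, husupp, hun⟩ := trunc_approx _ f hf hε
  refine ⟨u, huM, ⟨t.sup (fun i => i.natAbs) + 1, ?_⟩, hun⟩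
  apply Sop_nil _ u huM
  intro m hm
  apply husupp
  intro hmt
  have h2 : m.natAbs ≤ t.sup (fun i : ℤ => i.natAbs) :=
    Finset.le_sup (f := fun i : ℤ => i.natAbs) hmt
  omega

/-- the adjoint of `Top` is `Sop`. -/
lemma adjoint_Top : ContinuousLinearMap.adjoint Top = Sop := by
  symm
  rw [ContinuousLinearMap.eq_adjoint_iff]
  intro x y
  rw [lp.inner_eq_tsum, lp.inner_eq_tsum]
  simp only [RCLike.inner_apply]
  have hre := Equiv.tsum_eq (Equiv.subRight (1 : ℤ))
    (fun m : ℤ => y m * (starRingEnd ℂ) (Sop x m))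
  simp only [Equiv.subRight_apply] at hre
  rw [← hre]
  apply tsum_congr
  intro m
  rw [Sop, Top, shiftOp_apply, shiftOp_apply]
  by_cases h : m = 0
  · subst h
    rw [if_neg (by norm_num), if_neg (by norm_num)]
    simp
  · rw [if_pos (by omega), if_pos h]
    have hm : m - 1 + 1 = m := by ring
    have hm2 : m + -1 = m - 1 := by ring
    rw [hm, hm2, map_mul, Complex.conj_ofNat]
    ring

end HerreroAux

theorem herrero_subspace_version :
    ∃ T : HZ →L[ℂ] HZ, ∃ M₁ M₂ : Submodule ℂ HZ,
      IsClosed (M₁ : Set HZ) ∧ IsClosed (M₂ : Set HZ) ∧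
      M₁ ≠ ⊥ ∧ M₁ ≠ ⊤ ∧ M₂ ≠ ⊥ ∧ M₂ ≠ ⊤ ∧
      SubspaceHypercyclic T (M₁ : Set HZ) ∧
      SubspaceHypercyclic (ContinuousLinearMap.adjoint T) (M₂ : Set HZ) := by
  refine ⟨HerreroAux.Top, HerreroAux.Msub {m : ℤ | m < 0}, HerreroAux.Msub {m : ℤ | 0 ≤ m},
    HerreroAux.isClosed_Msub _, HerreroAux.isClosed_Msub _,
    HerreroAux.Msub_ne_bot (n := -1) (by norm_num),
    HerreroAux.Msub_ne_top (n := 0) (by norm_num),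
    HerreroAux.Msub_ne_bot (n := 0) (by norm_num),
    HerreroAux.Msub_ne_top (n := -1) (by norm_num),
    ?_, ?_⟩
  · exact HerreroAux.engine HerreroAux.Top HerreroAux.Rop _ (HerreroAux.isClosed_Msub _) HerreroAux.Top_mem (fun f => HerreroAux.Rop_mem f)
      HerreroAux.Top_Rop HerreroAux.Rop_norm HerreroAux.happrox1
  · rw [HerreroAux.adjoint_Top]
    exact HerreroAux.engine HerreroAux.Sop HerreroAux.R'op _ (HerreroAux.isClosed_Msub _) HerreroAux.Sop_mem (fun f => HerreroAux.R'op_mem f)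
      HerreroAux.Sop_R'op HerreroAux.R'op_norm HerreroAux.happrox2
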